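/- Let G be a finite group with cyclic Sylow p-subgroup of order q ≥ 4, k a field of characteristic p, ζ ∈ Ĥ^n(G,k) nonzero with n odd, and L_ζ = ker(ζ: Ω^n k → k). Then L_ζ is not stably isomorphic to Ω^m k for any integer m, because the dimension of L_ζ is not congruent to ±1 modulo q. -/

import Mathlib

open CategoryTheory

namespace StmodGH

/-- The trivial `kG`-module `k`, as a module over the group algebra. -/
noncomputable def triv (k G : Type) [Field k] [Group G] : ModuleCat (MonoidAlgebra k G) :=
  ModuleCat.of _ (Representation.trivial k (G := G) (V := k)).asModule

variable {A : Type} [Ring A]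

/-- A map is zero in the stable module category iff it factors through a projective. -/
def StablyZero {M N : ModuleCat A} (f : M ⟶ N) : Prop :=
  ∃ P : ModuleCat A, Projective P ∧ ∃ (g : M ⟶ P) (h : P ⟶ N), f = g ≫ h

/-- Two modules are isomorphic in the stable module category. -/
def StablyIso (M N : ModuleCat A) : Prop :=
  ∃ (f : M ⟶ N) (g : N ⟶ M), StablyZero (f ≫ g - 𝟙 M) ∧ StablyZero (g ≫ f - 𝟙 N)

/-- A short exact sequence `0 → X → Y → Z → 0` of modules. -/
structure SES (X Y Z : ModuleCat A) where
  i : X ⟶ Y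
  p : Y ⟶ Z
  inj : Function.Injective i
  surj : Function.Surjective p
  exact : ∀ y : Y, p y = 0 ↔ ∃ x, i x = y

/-- `Ω` is a family of syzygies/cosyzygies of `M`: `Ω 0 ≃ M` stably, and each
`Ω (i+1)` is the kernel of a surjection from a (finitely generated) projective onto `Ω i`. -/
def IsSyzygyFamily (M : ModuleCat A) (Ω : ℤ → ModuleCat A) : Prop :=
  (∀ i, Module.Finite A (Ω i)) ∧ StablyIso (Ω 0) M ∧
    ∀ i : ℤ, ∃ P : ModuleCat A, Projective P ∧ Nonempty (SES (Ω (i + 1)) P (Ω i))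

/-- Indecomposability, via idempotent endomorphisms. -/
def Indecomp (M : ModuleCat A) : Prop :=
  ¬ Limits.IsZero M ∧ ∀ f : M ⟶ M, f ≫ f = f → f = 0 ∨ f = 𝟙 M

/-- Membership in the thick subcategory of the stable module category generated by `G₀`:
the smallest class containing `G₀`, containing the (stably trivial) projective modules,
closed under stable isomorphism, under exact triangles (equivalently, two-out-of-three for
short exact sequences), and under direct summands. -/
inductive InThick (G₀ : ModuleCat A) : ModuleCat A → Prop
  | gen : InThick G₀ G₀
  | proj (P : ModuleCat A) : Projective P → InThick G₀ P
  | iso {M N : ModuleCat A} : StablyIso M N → InThick G₀ M → InThick G₀ N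
  | ext₁ {X Y Z : ModuleCat A} : SES X Y Z → InThick G₀ X → InThick G₀ Y → InThick G₀ Z
  | ext₂ {X Y Z : ModuleCat A} : SES X Y Z → InThick G₀ X → InThick G₀ Z → InThick G₀ Y
  | ext₃ {X Y Z : ModuleCat A} : SES X Y Z → InThick G₀ Y → InThick G₀ Z → InThick G₀ X
  | summand {M N : ModuleCat A} : (∃ (s : M ⟶ N) (r : N ⟶ M), s ≫ r = 𝟙 M) →
      InThick G₀ N → InThick G₀ M

/-- A short exact sequence `0 → X → B → N → 0` is almost split: it is non-split, has
indecomposable end terms, and every map to `N` that is not a split epimorphism factors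
through the middle term `B`. -/
def IsAlmostSplit {X B N : ModuleCat A} (s : SES X B N) : Prop :=
  Indecomp X ∧ Indecomp N ∧ (¬ ∃ sec : N ⟶ B, sec ≫ s.p = 𝟙 N) ∧
    ∀ (M : ModuleCat A) (f : M ⟶ N),
      (¬ ∃ sec : N ⟶ M, sec ≫ f = 𝟙 N) → ∃ g : M ⟶ B, g ≫ s.p = f

/-- The generating hypothesis for `kG`: every map in the thick subcategory generated by the
trivial module which induces the zero map on Tate cohomology
`Ĥ^i(G,−) = Hom_stmod(Ω^i k, −)` is zero in the stable module category. -/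
def GHolds (k G : Type) [Field k] [Group G] [Fintype G] : Prop :=
  ∀ Ωk : ℤ → ModuleCat (MonoidAlgebra k G), IsSyzygyFamily (triv k G) Ωk →
    ∀ M N : ModuleCat (MonoidAlgebra k G), InThick (triv k G) M → InThick (triv k G) N →
      ∀ f : M ⟶ N, (∀ (i : ℤ) (g : Ωk i ⟶ M), StablyZero (g ≫ f)) → StablyZero f

end StmodGH

/-!
The dimension of a finitely generated projective `kG`-module is divisible by `q = |P|`: restricted
to the abelian `p`-group `P` it stays projective, and `kP` is a local ring (in characteristic `p`,
`x ^ q` is the scalar `ε(x) ^ q`, `ε` the augmentation), so it is free over `kP`. Hence the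
dimension modulo `q` is an invariant of stable isomorphism: a stable isomorphism `M ≃ N` exhibits
`N ⊕ P₁ ≅ M ⊕ K` with `P₁`, `K` projective. The sequences `0 → Ω^(i+1) k → P → Ω^i k → 0` then
give `dim Ω^i k ≡ ±1 (mod q)`, so `dim L_ζ = dim Ω^n k - 1 ≡ 0` or `-2`, which is not `±1`
since `q ≥ 4`.
-/

open MonoidAlgebra

namespace MonoidAlgebra

variable {k H : Type*} [Field k] [Group H] [IsMulCommutative H] {p : ℕ} [Fact p.Prime] [CharP k p]

open scoped IsMulCommutative in
theorem pow_eq_algebraMap_lift_one_pow {n : ℕ} (hH : Nat.card H = p ^ n) (x : k[H]) :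
    x ^ p ^ n = algebraMap k k[H] (lift k k H 1 x ^ p ^ n) := by
  have : CharP k[H] p := charP_of_injective_algebraMap (algebraMap k k[H]).injective p
  have frobenius_eq : iterateFrobenius k[H] p n =
      (algebraMap k k[H]).comp ((iterateFrobenius k p n).comp (lift k k H 1).toRingHom) := by
    refine ringHom_ext (fun c => ?_) (fun h => ?_)
    · simp [iterateFrobenius_def, single_pow]
    · simp [iterateFrobenius_def, single_pow, ← hH, pow_card_eq_one']
  simpa [iterateFrobenius_def] using DFunLike.congr_fun frobenius_eq x

theorem isLocalRing_of_isPGroup [Finite H] (hH : IsPGroup p H) : IsLocalRing k[H] := by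
  obtain ⟨n, hn⟩ := hH.exists_card_eq
  have isUnit_of_lift_ne_zero (b : k[H]) (hb : lift k k H 1 b ≠ 0) : IsUnit b := by
    refine (isUnit_pow_iff (pow_ne_zero n (Fact.out : p.Prime).ne_zero)).1 ?_
    rw [pow_eq_algebraMap_lift_one_pow hn]
    exact (pow_ne_zero _ hb).isUnit.map _
  refine .of_isUnit_or_isUnit_one_sub_self fun a => ?_
  by_cases ha : lift k k H 1 a = 0
  · exact .inr (isUnit_of_lift_ne_zero _ (by simp [ha]))
  · exact .inl (isUnit_of_lift_ne_zero _ ha)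

end MonoidAlgebra

open scoped IsMulCommutative in
theorem Representation.card_dvd_finrank_of_projective {k H V : Type*} [Field k] [Group H]
    [IsMulCommutative H] [Finite H] {p : ℕ} [Fact p.Prime] [CharP k p] (hH : IsPGroup p H)
    [AddCommGroup V] [Module k V] [Module.Finite k V] (ρ : Representation k H V)
    [Module.Projective k[H] ρ.asModule] :
    Nat.card H ∣ Module.finrank k V := by
  have := isLocalRing_of_isPGroup (k := k) hH
  have : Module.Finite k[H] ρ.asModule := .of_restrictScalars_finite k _ _
  have : Module.Free k[H] ρ.asModule := Module.free_of_flat_of_isLocalRing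
  have : Fintype H := .ofFinite H
  refine ⟨Module.finrank k[H] ρ.asModule, ?_⟩
  rw [← ρ.asModuleEquiv.finrank_eq, ← Module.finrank_mul_finrank k k[H] ρ.asModule,
    Module.finrank_eq_card_basis (MonoidAlgebra.basis H k), Nat.card_eq_fintype_card]

section RestrictScalars

variable (k A M : Type*) [Field k] [Ring A] [Algebra k A] [AddCommGroup M] [Module k M]
  [Module A M] [IsScalarTower k A M]

def RestrictScalars.linearEquiv : RestrictScalars k A M ≃ₗ[k] M where
  __ := RestrictScalars.addEquiv k A M
  map_smul' c x := by simp [RestrictScalars.addEquiv_map_smul]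

theorem RestrictScalars.finrank_eq :
    Module.finrank k (RestrictScalars k A M) = Module.finrank k M :=
  (RestrictScalars.linearEquiv k A M).finrank_eq

end RestrictScalars

theorem MonoidAlgebra.card_subgroup_dvd_finrank_of_projective {k G : Type} [Field k] [Group G]
    {p : ℕ} [Fact p.Prime] [CharP k p] (S : Subgroup G) [IsMulCommutative S] [Finite S]
    (hS : IsPGroup p S) (V : Type) [AddCommGroup V] [Module k V] [Module k[G] V]
    [IsScalarTower k k[G] V] [Module.Finite k V] [Module.Projective k[G] V] :
    Nat.card S ∣ Module.finrank k V := by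
  let VS := (Rep.resFunctor S.subtype).obj (Rep.ofModuleMonoidAlgebra.obj (ModuleCat.of k[G] V))
  have : Projective (Rep.toModuleMonoidAlgebra.obj VS) := by
    have : Projective (Rep.ofModuleMonoidAlgebra.obj (ModuleCat.of k[G] V)) :=
      (Rep.equivalenceModuleMonoidAlgebra.symm.map_projective_iff _).2
        ((IsProjective.iff_projective _).1 ‹_›)
    exact (Rep.equivalenceModuleMonoidAlgebra.map_projective_iff _).2
      ((Rep.resFunctor S.subtype).projective_obj_of_projective this)
  have : Module.Projective k[S] VS.ρ.asModule := (IsProjective.iff_projective _).2 this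
  have : Module.Finite k VS.V := .equiv (RestrictScalars.linearEquiv k k[G] V).symm
  have := Representation.card_dvd_finrank_of_projective hS VS.ρ
  rwa [← RestrictScalars.finrank_eq k k[G] V]

theorem LinearMap.finrank_eq_add_of_exact {K X Y Z : Type*} [DivisionRing K] [AddCommGroup X]
    [Module K X] [AddCommGroup Y] [Module K Y] [AddCommGroup Z] [Module K Z]
    [FiniteDimensional K Y] {i : X →ₗ[K] Y} {p : Y →ₗ[K] Z} (hi : Function.Injective i)
    (hp : Function.Surjective p) (h : Function.Exact i p) :
    Module.finrank K Y = Module.finrank K X + Module.finrank K Z := by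
  rw [← p.finrank_range_add_finrank_ker, LinearMap.range_eq_top.2 hp, finrank_top,
    LinearMap.exact_iff.1 h, LinearMap.finrank_range_of_inj hi, add_comm]

theorem Module.Projective.range_of_isIdempotentElem {R Y Q : Type*} [Ring R] [AddCommGroup Y]
    [Module R Y] [AddCommGroup Q] [Module R Q] [Module.Projective R Q] {e : Y →ₗ[R] Y}
    (he : IsIdempotentElem e) (a : Q →ₗ[R] Y) (b : Y →ₗ[R] Q) (hab : a ∘ₗ b = e) :
    Module.Projective R (LinearMap.range e) := by
  have he_apply (y : Y) : e (e y) = e y := DFunLike.congr_fun he y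
  have hab_apply (y : Y) : a (b y) = e y := DFunLike.congr_fun hab y
  refine .of_split (b ∘ₗ (LinearMap.range e).subtype) (e.rangeRestrict ∘ₗ a) ?_
  ext ⟨_, y, rfl⟩
  simp [hab_apply, he_apply]

theorem ZMod.ne_one_and_ne_neg_one_of_add_one {q : ℕ} (hq : 4 ≤ q) {x : ZMod q}
    (hx : x + 1 = 1 ∨ x + 1 = -1) : x ≠ 1 ∧ x ≠ -1 := by
  have natCast_ne_zero (c : ℕ) (hc : 0 < c) (hcq : c < q) : (c : ZMod q) ≠ 0 := by
    rw [Ne, ZMod.natCast_eq_zero_iff]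
    exact Nat.not_dvd_of_pos_of_lt hc hcq
  have one_ne_zero : (1 : ZMod q) ≠ 0 := by exact_mod_cast natCast_ne_zero 1 one_pos (by omega)
  have three_ne_zero : (3 : ZMod q) ≠ 0 := by
    exact_mod_cast natCast_ne_zero 3 (by norm_num) (by omega)
  rcases hx with hx | hx <;> refine ⟨fun h => ?_, fun h => ?_⟩ <;> subst h
  · exact one_ne_zero (by linear_combination hx)
  · exact one_ne_zero (by linear_combination -hx)
  · exact three_ne_zero (by linear_combination hx)
  · exact one_ne_zero (by linear_combination hx)

namespace StmodGH

universe u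

open scoped ModuleCat

def ProjectiveFinrankDvd (k A : Type) [Field k] [Ring A] [Algebra k A] (q : ℕ) : Prop :=
  ∀ (V : Type u) [AddCommGroup V] [Module k V] [Module A V] [IsScalarTower k A V],
    Module.Finite A V → Module.Projective A V → q ∣ Module.finrank k V

variable {k A : Type} [Field k] [Ring A] [Algebra k A]

theorem ProjectiveFinrankDvd.finrank_cast_eq_of_split [Module.Finite k A] {q : ℕ}
    (hq : ProjectiveFinrankDvd.{u} k A q) {Y M Q : Type u} [AddCommGroup Y] [Module k Y]
    [Module A Y] [IsScalarTower k A Y] [Module.Finite A Y] [AddCommGroup M] [Module k M]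
    [Module A M] [IsScalarTower k A M] [AddCommGroup Q] [Module A Q] [Module.Projective A Q]
    {r : Y →ₗ[A] M} {s : M →ₗ[A] Y} (hrs : r ∘ₗ s = LinearMap.id) {a : Q →ₗ[A] Y} {b : Y →ₗ[A] Q}
    (hab : a ∘ₗ b = LinearMap.id - s ∘ₗ r) :
    (Module.finrank k Y : ZMod q) = Module.finrank k M := by
  have hrs_apply (m : M) : r (s m) = m := DFunLike.congr_fun hrs m
  set e := LinearMap.id - s ∘ₗ r
  have he : IsIdempotentElem e := by
    ext y
    simp [e, hrs_apply]
  have hexact : Function.Exact (LinearMap.range e).subtype r := by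
    refine fun y => ⟨fun hy => ⟨⟨y, y, by simp [e, hy]⟩, rfl⟩, ?_⟩
    rintro ⟨⟨_, z, rfl⟩, rfl⟩
    simp [e, hrs_apply]
  have := Module.Projective.range_of_isIdempotentElem he a b hab
  have : Module.Finite k Y := .trans A Y
  have hdim := LinearMap.finrank_eq_add_of_exact
    (i := (LinearMap.range e).subtype.restrictScalars k) (p := r.restrictScalars k)
    (Submodule.subtype_injective _) (fun m => ⟨s m, hrs_apply m⟩) hexact
  obtain ⟨d, hd⟩ := hq (LinearMap.range e) inferInstance inferInstance
  simpa [hd] using congr(($hdim : ZMod q))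

theorem StablyZero.exists_finite {M N : ModuleCat.{u} A} [Module.Finite A M] {f : M ⟶ N}
    (hf : StablyZero f) : ∃ P : ModuleCat.{u} A, Module.Finite A P ∧ Module.Projective A P ∧
      ∃ (g : M ⟶ P) (h : P ⟶ N), f = g ≫ h := by
  classical
  obtain ⟨P, hP, g, h, rfl⟩ := hf
  obtain ⟨σ, hσ⟩ := Module.projective_def'.1 ((IsProjective.iff_projective P).2 hP)
  let u := σ ∘ₗ g.hom
  obtain ⟨T, hT⟩ := Module.Finite.fg_top.map u
  let S : Finset P := T.biUnion (·.support)
  have hu (m : M) : u m ∈ Finsupp.supported A A (S : Set P) := by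
    have : u m ∈ Submodule.span A (T : Set (P →₀ A)) := hT ▸ Submodule.mem_map_of_mem trivial
    refine Submodule.span_le.2 (fun v hv => ?_) this
    exact (Finsupp.mem_supported A v).2 (by simpa using Finset.subset_biUnion_of_mem _ hv)
  let W := Finsupp.supported A A (S : Set P)
  refine ⟨ModuleCat.of A W, .equiv (Finsupp.supportedEquivFinsupp _).symm,
    .of_equiv (Finsupp.supportedEquivFinsupp _).symm, ModuleCat.ofHom (u.codRestrict W hu),
    ModuleCat.ofHom (h.hom ∘ₗ Finsupp.linearCombination A id ∘ₗ W.subtype), ?_⟩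
  ext m
  simpa [u] using congr(h $(DFunLike.congr_fun hσ (g m))).symm

theorem StablyIso.finrank_cast_eq [Module.Finite k A] {q : ℕ}
    (hq : ProjectiveFinrankDvd.{u} k A q) {M N : ModuleCat.{u} A} [Module.Finite A M]
    [Module.Finite A N] (hMN : StablyIso M N) :
    (Module.finrank k M : ZMod q) = Module.finrank k N := by
  obtain ⟨f, g, hgf, hfg⟩ := hMN
  obtain ⟨P, _, _, β, α, hβα⟩ := hgf.exists_finite
  obtain ⟨Q, _, _, δ, γ, hδγ⟩ := hfg.exists_finite
  have hgf_apply (m : M) : g (f m) = m + α (β m) := by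
    simpa [sub_eq_iff_eq_add'] using congr(($hβα).hom m)
  have hfg_apply (x : N) : f (g x) = x + γ (δ x) := by
    simpa [sub_eq_iff_eq_add'] using congr(($hδγ).hom x)
  let r : N × P →ₗ[A] M := g.hom ∘ₗ LinearMap.fst A N P - α.hom ∘ₗ LinearMap.snd A N P
  let s : M →ₗ[A] N × P := f.hom.prod β.hom
  -- `id - s ∘ r` factors through `Q × P × P`, using `f ∘ g = id + γ ∘ δ`
  let b : N × P →ₗ[A] Q × P × P :=
    (δ.hom ∘ₗ LinearMap.fst A N P).prod
      ((β.hom ∘ₗ g.hom ∘ₗ LinearMap.fst A N P).prod (LinearMap.snd A N P))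
  let a : Q × P × P →ₗ[A] N × P :=
    (-(LinearMap.inl A N P ∘ₗ γ.hom)).coprod ((-LinearMap.inr A N P).coprod
      (LinearMap.inl A N P ∘ₗ f.hom ∘ₗ α.hom +
        LinearMap.inr A N P ∘ₗ (LinearMap.id + β.hom ∘ₗ α.hom)))
  have hrs : r ∘ₗ s = LinearMap.id := by
    ext m
    simp [r, s, hgf_apply]
  have hab : a ∘ₗ b = LinearMap.id - s ∘ₗ r := by
    ext y <;> simp [a, b, r, s, hfg_apply]
  have hNP := hq.finrank_cast_eq_of_split hrs hab
  have : Module.Finite k N := .trans A N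
  have : Module.Finite k P := .trans A P
  obtain ⟨c, hc⟩ := hq P inferInstance inferInstance
  simpa [Module.finrank_prod, hc] using hNP.symm

theorem SES.finrank_eq_add {X Y Z : ModuleCat.{u} A} (s : SES X Y Z) [Module.Finite k Y] :
    Module.finrank k Y = Module.finrank k X + Module.finrank k Z :=
  LinearMap.finrank_eq_add_of_exact (i := s.i.hom.restrictScalars k)
    (p := s.p.hom.restrictScalars k) s.inj s.surj s.exact

theorem IsSyzygyFamily.finrank_cast_eq_or_eq_neg [Module.Finite k A] {q : ℕ}
    (hq : ProjectiveFinrankDvd.{u} k A q) {M : ModuleCat.{u} A} [Module.Finite A M]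
    {Ω : ℤ → ModuleCat.{u} A} (hΩ : IsSyzygyFamily M Ω) (i : ℤ) :
    (Module.finrank k (Ω i) : ZMod q) = Module.finrank k M ∨
      (Module.finrank k (Ω i) : ZMod q) = -Module.finrank k M := by
  obtain ⟨hfin, h0, hses⟩ := hΩ
  have step (j : ℤ) : (Module.finrank k (Ω (j + 1)) : ZMod q) = -Module.finrank k (Ω j) := by
    obtain ⟨P, hP, ⟨s⟩⟩ := hses j
    have hPfin : Module.Finite A P := .of_exact (f := s.i.hom) s.exact s.surj
    have : Module.Finite k P := .trans A P
    obtain ⟨c, hc⟩ := hq P hPfin ((IsProjective.iff_projective P).2 hP)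
    have := congr(($(s.finrank_eq_add (k := k)) : ZMod q))
    push_cast [hc, ZMod.natCast_self] at this
    linear_combination -this
  have hΩ0 := h0.finrank_cast_eq hq
  induction i using Int.induction_on with
  | zero => exact .inl hΩ0
  | succ j ih => rcases ih with h | h <;> simp [step, h]
  | pred j ih =>
    have := step (-j - 1)
    rw [sub_add_cancel] at this
    rcases ih with h | h <;> [right; left] <;> linear_combination this - h

theorem finrank_triv (k G : Type) [Field k] [Group G] : Module.finrank k (triv k G) = 1 :=
  (RestrictScalars.finrank_eq k k[G] (Representation.trivial k G k).asModule).trans <|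
    (Representation.trivial k G k).asModuleEquiv.finrank_eq.trans (Module.finrank_self k)

instance (k G : Type) [Field k] [Group G] : Module.Finite k[G] (triv k G) :=
  have : Module.Finite k (triv k G) := Module.finite_of_finrank_eq_succ (finrank_triv k G)
  .of_restrictScalars_finite k k[G] _

theorem Lzeta_dimension_obstruction_general
    (k G : Type) [Field k] [Group G] [Fintype G]
    (p : ℕ) [Fact p.Prime] [CharP k p]
    (P : Sylow p G) (hcyc : IsCyclic P) (q : ℕ) (hq : Nat.card P = q) (hq4 : 4 ≤ q)
    (Ωk : ℤ → ModuleCat (MonoidAlgebra k G)) (hΩk : IsSyzygyFamily (triv k G) Ωk)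
    (n : ℤ)
    (ζ : Ωk n ⟶ triv k G) (hsurj : Function.Surjective ζ)
    (L : ModuleCat (MonoidAlgebra k G))
    (hL : L = ModuleCat.of (MonoidAlgebra k G) (LinearMap.ker ζ.hom)) :
    (¬ Module.finrank k (RestrictScalars k (MonoidAlgebra k G) L) ≡ 1 [MOD q] ∧
        ¬ Module.finrank k (RestrictScalars k (MonoidAlgebra k G) L) ≡ q - 1 [MOD q]) ∧
      ∀ m : ℤ, ¬ StablyIso L (Ωk m) := by
  have hdvd : ProjectiveFinrankDvd k k[G] q := fun V _ _ _ _ _ _ =>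
    have : Module.Finite k V := .trans k[G] V
    hq ▸ MonoidAlgebra.card_subgroup_dvd_finrank_of_projective (P : Subgroup G) P.isPGroup' V
  have hΩ (i : ℤ) := hΩk.finrank_cast_eq_or_eq_neg hdvd i
  simp only [finrank_triv, Nat.cast_one] at hΩ
  have := hΩk.1
  have : Module.Finite k (Ωk n) := .trans k[G] _
  have hLdim : Module.finrank k (Ωk n) = Module.finrank k L + 1 := by
    subst hL
    rw [← finrank_triv k G]
    exact LinearMap.finrank_eq_add_of_exact (i := (LinearMap.ker ζ.hom).subtype.restrictScalars k)
      (p := ζ.hom.restrictScalars k) (Submodule.subtype_injective _) hsurj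
      (LinearMap.exact_subtype_ker_map _)
  have hL_ne : (Module.finrank k L : ZMod q) ≠ 1 ∧ (Module.finrank k L : ZMod q) ≠ -1 :=
    ZMod.ne_one_and_ne_neg_one_of_add_one hq4 (by simpa [hLdim] using hΩ n)
  have : IsNoetherianRing k[G] := isNoetherian_of_tower k inferInstance
  have : Module.Finite k[G] L := by subst hL; infer_instance
  refine ⟨⟨fun h => hL_ne.1 ?_, fun h => hL_ne.2 ?_⟩, fun m hm => ?_⟩
  · exact ((ZMod.natCast_eq_natCast_iff _ _ _).2 h).trans Nat.cast_one
  · have := (ZMod.natCast_eq_natCast_iff _ _ _).2 h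
    rwa [Nat.cast_pred (by omega), ZMod.natCast_self, zero_sub] at this
  · have hLm := hm.finrank_cast_eq hdvd
    exact (hΩ m).elim (fun h => hL_ne.1 (hLm.trans h)) (fun h => hL_ne.2 (hLm.trans h))

/-- Let `G` have a cyclic Sylow `p`-subgroup of order `q ≥ 4`, `k` a
field of characteristic `p`, `ζ ∈ Ĥ^n(G,k)` nonzero with `n` odd, represented by a
surjective cocycle `ζ : Ω^n k ⟶ k`, and `L_ζ = ker ζ`. Then the `k`-dimension of `L_ζ` is
not congruent to `1` or `−1` modulo `q`, and consequently `L_ζ` is not stably isomorphic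
to `Ω^m k` for any integer `m`. -/
theorem Lzeta_dimension_obstruction
    (k G : Type) [Field k] [Group G] [Fintype G]
    (p : ℕ) [Fact p.Prime] [CharP k p]
    (P : Sylow p G) (hcyc : IsCyclic P) (q : ℕ) (hq : Nat.card P = q) (hq4 : 4 ≤ q)
    (Ωk : ℤ → ModuleCat (MonoidAlgebra k G)) (hΩk : IsSyzygyFamily (triv k G) Ωk)
    (n : ℤ) (hn : Odd n)
    (ζ : Ωk n ⟶ triv k G) (hsurj : Function.Surjective ζ) (hζ : ¬ StablyZero ζ)
    (L : ModuleCat (MonoidAlgebra k G))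
    (hL : L = ModuleCat.of (MonoidAlgebra k G) (LinearMap.ker ζ.hom)) :
    (¬ Module.finrank k (RestrictScalars k (MonoidAlgebra k G) L) ≡ 1 [MOD q] ∧
        ¬ Module.finrank k (RestrictScalars k (MonoidAlgebra k G) L) ≡ q - 1 [MOD q]) ∧
      ∀ m : ℤ, ¬ StablyIso L (Ωk m) :=
  Lzeta_dimension_obstruction_general k G p P hcyc q hq hq4 Ωk hΩk n ζ hsurj L hL

end StmodGH
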